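/- Asymptotics of the population tuning scale: let X be a real random variable with E(X) = 0 and 0 < σ² = E(X²) < ∞. Let t = tₙ > 0 satisfy tₙ → ∞ and tₙ = o(n) as n → ∞, and for each n let τ_t be the unique positive solution of E[min(X², τ²)]/τ² = t/n. Then τ_t → ∞, σ_{τ_t} → σ, and τ_t ~ σ·√(n/t) (i.e. τ_t/(σ√(n/t)) → 1) as n → ∞, where σ_τ² = E[min(X², τ²)]. -/

import Mathlib

open MeasureTheory Filter

/-!
Write `σ_s² = E[min(X², s²)]`. The ratio `σ_s² / s²` is positive and antitone in `s > 0`, so the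
tuning equation `σ_τ² / τ² = t/n → 0` forces `τ → ∞`; dominated convergence then gives
`σ_τ² → E[X²] = σ²`. Finally the tuning equation says exactly `σ_τ = τ √(t/n)`, so
`τ / (σ √(n/t)) = σ_τ / σ → 1`.
-/

section TruncatedSecondMoment

variable {Ω : Type*} [MeasurableSpace Ω] {μ : Measure Ω} {X : Ω → ℝ}

noncomputable def truncSecondMoment (μ : Measure Ω) (X : Ω → ℝ) (s : ℝ) : ℝ :=
  ∫ ω, min (X ω ^ 2) (s ^ 2) ∂μ

lemma integrable_min_sq (hX : MemLp X 2 μ) (s : ℝ) :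
    Integrable (fun ω => min (X ω ^ 2) (s ^ 2)) μ := by
  refine hX.integrable_sq.mono (hX.aestronglyMeasurable.pow 2 |>.inf aestronglyMeasurable_const)
    (Eventually.of_forall fun ω => ?_)
  rw [Real.norm_of_nonneg (le_min (sq_nonneg _) (sq_nonneg _)), Real.norm_of_nonneg (sq_nonneg _)]
  exact min_le_left _ _

lemma truncSecondMoment_pos (hX : MemLp X 2 μ) (hX2 : 0 < ∫ ω, X ω ^ 2 ∂μ) {s : ℝ} (hs : 0 < s) :
    0 < truncSecondMoment μ X s := by
  have hnonneg : ∀ ω, 0 ≤ min (X ω ^ 2) (s ^ 2) := fun ω => le_min (sq_nonneg _) (sq_nonneg _)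
  refine (integral_nonneg hnonneg).lt_of_ne fun hzero => hX2.ne' ?_
  have hmin : (fun ω => min (X ω ^ 2) (s ^ 2)) =ᵐ[μ] 0 :=
    (integral_eq_zero_iff_of_nonneg hnonneg (integrable_min_sq hX s)).mp hzero.symm
  refine integral_eq_zero_of_ae (hmin.mono fun ω hω => ?_)
  by_contra hne
  have : 0 < min (X ω ^ 2) (s ^ 2) :=
    lt_min ((sq_nonneg _).lt_of_ne (Ne.symm hne)) (pow_pos hs 2)
  exact this.ne' hω

lemma min_div_sq_antitoneOn {x : ℝ} (hx : 0 ≤ x) :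
    AntitoneOn (fun s : ℝ => min x (s ^ 2) / s ^ 2) (Set.Ioi 0) := by
  intro a ha b _ hab
  have ha2 : 0 < a ^ 2 := pow_pos ha 2
  have hb2 : 0 < b ^ 2 := ha2.trans_le (pow_le_pow_left₀ (le_of_lt ha) hab 2)
  simp only [← min_div_div_right (le_of_lt ha2), ← min_div_div_right (le_of_lt hb2),
    div_self ha2.ne', div_self hb2.ne']
  exact min_le_min_right _
    (div_le_div_of_nonneg_left hx ha2 (pow_le_pow_left₀ (le_of_lt ha) hab 2))

lemma truncSecondMoment_div_sq_antitoneOn (hX : MemLp X 2 μ) :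
    AntitoneOn (fun s => truncSecondMoment μ X s / s ^ 2) (Set.Ioi 0) := by
  intro a ha b hb hab
  simp only [truncSecondMoment, ← integral_div]
  exact integral_mono ((integrable_min_sq hX b).div_const _) ((integrable_min_sq hX a).div_const _)
    fun ω => min_div_sq_antitoneOn (sq_nonneg (X ω)) ha hb hab

lemma tendsto_truncSecondMoment_atTop (hX : MemLp X 2 μ) :
    Tendsto (truncSecondMoment μ X) atTop (nhds (∫ ω, X ω ^ 2 ∂μ)) := by
  refine tendsto_integral_filter_of_dominated_convergence (fun ω => X ω ^ 2)
    (Eventually.of_forall fun s => (integrable_min_sq hX s).aestronglyMeasurable) ?_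
    hX.integrable_sq ?_
  · refine Eventually.of_forall fun s => Eventually.of_forall fun ω => ?_
    rw [Real.norm_of_nonneg (le_min (sq_nonneg _) (sq_nonneg _))]
    exact min_le_left _ _
  · refine Eventually.of_forall fun ω => tendsto_const_nhds.congr' ?_
    filter_upwards [eventually_ge_atTop |X ω|] with s hs
    exact (min_eq_left (sq_le_sq.mpr (hs.trans (le_abs_self s)))).symm

lemma tendsto_atTop_of_truncSecondMoment_div_sq_eq {ι : Type*} {l : Filter ι} {τ r : ι → ℝ}
    (hX : MemLp X 2 μ) (hX2 : 0 < ∫ ω, X ω ^ 2 ∂μ) (hr : Tendsto r l (nhds 0))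
    (hτ : ∀ᶠ i in l, 0 < τ i ∧ truncSecondMoment μ X (τ i) / τ i ^ 2 = r i) :
    Tendsto τ l atTop := by
  refine tendsto_atTop.mpr fun M => ?_
  set M' := max M 1
  have hM' : 0 < M' := one_pos.trans_le (le_max_right _ _)
  have hsmall : ∀ᶠ i in l, r i < truncSecondMoment μ X M' / M' ^ 2 :=
    hr.eventually (gt_mem_nhds (div_pos (truncSecondMoment_pos hX hX2 hM') (pow_pos hM' 2)))
  filter_upwards [hsmall, hτ] with i hi ⟨hτpos, hτeq⟩
  by_contra! hlt
  have := truncSecondMoment_div_sq_antitoneOn hX hτpos (Set.mem_Ioi.mpr hM')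
    (hlt.le.trans (le_max_left _ _))
  simp only [hτeq] at this
  linarith

end TruncatedSecondMoment

lemma div_mul_sqrt_inv_eq_sqrt_div {v q τ σ : ℝ} (hτ : 0 < τ) (h : v / τ ^ 2 = q) :
    τ / (σ * √q⁻¹) = √v / σ := by
  rw [(div_eq_iff (pow_pos hτ 2).ne').mp h, Real.sqrt_mul' _ (sq_nonneg τ), Real.sqrt_sq hτ.le,
    Real.sqrt_inv, div_mul_eq_div_div, div_inv_eq_mul]
  ring

theorem population_tuning_scale_asymptotics_general
    {Ω : Type*} [MeasurableSpace Ω] (μ : Measure Ω)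
    (X : Ω → ℝ) (hL2 : MemLp X 2 μ)
    (σ : ℝ) (hσpos : 0 < σ) (hσ : σ ^ 2 = ∫ ω, X ω ^ 2 ∂μ)
    (t : ℕ → ℝ)
    (hto : Tendsto (fun n => t n / (n : ℝ)) atTop (nhds 0))
    (τ : ℕ → ℝ)
    (hτ : ∀ᶠ n in atTop, 0 < τ n ∧
      (∫ ω, min (X ω ^ 2) (τ n ^ 2) ∂μ) / τ n ^ 2 = t n / n) :
    Tendsto τ atTop atTop ∧
    Tendsto (fun n => Real.sqrt (∫ ω, min (X ω ^ 2) (τ n ^ 2) ∂μ)) atTop (nhds σ) ∧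
    Tendsto (fun n => τ n / (σ * Real.sqrt ((n : ℝ) / t n))) atTop (nhds 1) := by
  have hτtop : Tendsto τ atTop atTop :=
    tendsto_atTop_of_truncSecondMoment_div_sq_eq hL2 (hσ ▸ pow_pos hσpos 2) hto hτ
  have hmoment : Tendsto (fun n => √(truncSecondMoment μ X (τ n))) atTop (nhds σ) := by
    simpa [← hσ, Real.sqrt_sq hσpos.le] using
      ((tendsto_truncSecondMoment_atTop hL2).comp hτtop).sqrt
  refine ⟨hτtop, hmoment, ?_⟩
  have hratio : ∀ᶠ n in atTop,
      √(truncSecondMoment μ X (τ n)) / σ = τ n / (σ * √((n : ℝ) / t n)) :=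
    hτ.mono fun n ⟨hτpos, hτeq⟩ => by
      rw [← inv_div (t n)]
      exact (div_mul_sqrt_inv_eq_sqrt_div hτpos hτeq).symm
  simpa [div_self hσpos.ne'] using (hmoment.div_const σ).congr' hratio

/-- **Proposition A.2(ii) (Chen–Zhou 2019): asymptotics of the population tuning scale.**
Let `X` satisfy `E X = 0` and `0 < σ² = E X² < ∞`.  If `t = tₙ → ∞` with `tₙ = o(n)`, and
`τₙ` is the (eventually unique) positive solution of `E[min(X², τ²)]/τ² = tₙ/n`, then
`τₙ → ∞`, `σ_{τₙ} → σ` and `τₙ ∼ σ √(n/tₙ)` as `n → ∞`, where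
`σ_τ² = E[min(X², τ²)]`. -/
theorem population_tuning_scale_asymptotics
    {Ω : Type*} [MeasurableSpace Ω] (μ : Measure Ω) [IsProbabilityMeasure μ]
    (X : Ω → ℝ) (hX : Measurable X) (hL2 : MemLp X 2 μ)
    (hmean : ∫ ω, X ω ∂μ = 0)
    (σ : ℝ) (hσpos : 0 < σ) (hσ : σ ^ 2 = ∫ ω, X ω ^ 2 ∂μ)
    (t : ℕ → ℝ) (ht0 : ∀ n, 0 < t n)
    (htinf : Tendsto t atTop atTop)
    (hto : Tendsto (fun n => t n / (n : ℝ)) atTop (nhds 0))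
    (τ : ℕ → ℝ)
    (hτ : ∀ᶠ n in atTop, 0 < τ n ∧
      (∫ ω, min (X ω ^ 2) (τ n ^ 2) ∂μ) / τ n ^ 2 = t n / n) :
    Tendsto τ atTop atTop ∧
    Tendsto (fun n => Real.sqrt (∫ ω, min (X ω ^ 2) (τ n ^ 2) ∂μ)) atTop (nhds σ) ∧
    Tendsto (fun n => τ n / (σ * Real.sqrt ((n : ℝ) / t n))) atTop (nhds 1) :=
  population_tuning_scale_asymptotics_general μ X hL2 σ hσpos hσ t hto τ hτ
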